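/- Let σ be a positive n×n matrix measure with finite moments, let r be a nonzero null vector polynomial of minimal height h_1 (every nonzero null polynomial has height ≥ h_1), and let p_1,...,p_{h_1} be the orthonormal vector polynomials produced by the first h_1 Gram–Schmidt iterations applied to e_1, e_2,..., with h(p_k) = k−1. Then the Gram–Schmidt vector s = e_{h_1+1} − Σ_{i=1}^{h_1} ⟨p_i, e_{h_1+1}⟩ p_i has zero norm in L_2(R,σ). -/

import Mathlib

/-!
The vectors `r, p_0, …, p_{h₁-1}` have the distinct heights `h₁, 0, …, h₁-1`, so by leading-term
elimination they span every vector polynomial of height `≤ h₁`; in particular they span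
`e = e_{h₁+1}` and hence the Gram–Schmidt residual `s`. Now `s` is orthogonal to every `p_i` by
construction, and to the null vector `r` by Cauchy–Schwarz for the semi-definite form. So `s` is
orthogonal to a spanning set of a subspace containing `s` itself, and `⟪s, s⟫ = 0`.
-/

open Polynomial

/-- The height of an `n`-dimensional vector polynomial (0-indexed components):
`h(r) = max_j (n · deg R_j + j)`, with `deg 0 = ⊥` and `h(0) = ⊥`. -/
noncomputable def height {n : ℕ} (r : Fin n → Polynomial ℂ) : WithBot ℕ :=
  Finset.univ.sup fun j : Fin n => WithBot.map (fun d => n * d + (j : ℕ)) (r j).degree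

/-- The vector polynomial `e_{nk+i}(z) = z^k e_i`; in 0-indexed form `eVP n s = z^(s/n) e_(s%n)`,
corresponding to the 1-indexed `e_{s+1}`. -/
noncomputable def eVP (n : ℕ) (s : ℕ) : Fin n → Polynomial ℂ :=
  fun j => if (j : ℕ) = s % n then X ^ (s / n) else 0

/-- A positive `n×n` matrix measure `σ` on `ℝ` with all moments finite, encoded through the
(possibly degenerate) sesquilinear form `B f g = ∫_ℝ ⟨f(t), dσ(t) g(t)⟩` it induces on
`n`-dimensional vector polynomials (antilinear in the first argument). The axiom `mul_symm`
expresses that multiplication by the real variable `t` is symmetric for the form. -/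
structure MatMeasureForm (n : ℕ) where
  B : (Fin n → Polynomial ℂ) → (Fin n → Polynomial ℂ) → ℂ
  add_right : ∀ f g h, B f (g + h) = B f g + B f h
  smul_right : ∀ (c : ℂ) f g, B f (c • g) = c * B f g
  conj_symm : ∀ f g, B g f = (starRingEnd ℂ) (B f g)
  nonneg : ∀ f, 0 ≤ (B f f).re
  mul_symm : ∀ f g, B (fun j => X * f j) g = B f (fun j => X * g j)

lemma Polynomial.map_degree_eq_sup_support {R : Type*} [Semiring R] {f : ℕ → ℕ}
    (hf : Monotone f) (P : R[X]) :
    P.degree.map f = P.support.sup fun d => ((f d : ℕ) : WithBot ℕ) :=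
  Finset.apply_sup_eq_sup_comp_of_linearOrder _ (Monotone.withBot_map hf) rfl

section height

variable {n : ℕ}

lemma height_eq_sup_support (q : Fin n → ℂ[X]) :
    height q = Finset.univ.sup fun i => (q i).support.sup fun d => ((n * d + i : ℕ) : WithBot ℕ) :=
  Finset.sup_congr rfl fun i _ =>
    map_degree_eq_sup_support (fun _ _ h => by gcongr) (q i)

lemma height_le_iff {q : Fin n → ℂ[X]} {m : ℕ} :
    height q ≤ m ↔ ∀ i d, (q i).coeff d ≠ 0 → n * d + i ≤ m := by
  simp only [height_eq_sup_support, Finset.sup_le_iff, Finset.mem_univ, true_implies,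
    mem_support_iff, Nat.cast_le]

lemma height_lt_iff {q : Fin n → ℂ[X]} {m : ℕ} :
    height q < m ↔ ∀ i d, (q i).coeff d ≠ 0 → n * d + i < m := by
  simp only [height_eq_sup_support, Finset.sup_lt_iff (by simp : (⊥ : WithBot ℕ) < m),
    Finset.mem_univ, true_implies, mem_support_iff, Nat.cast_lt]

lemma Fin.eq_of_mul_add_eq {i j : Fin n} {d e : ℕ} (h : n * d + i = n * e + j) :
    i = j ∧ d = e := by
  have hmod := congrArg (· % n) h
  have hdiv := congrArg (· / n) h
  simp only [Nat.mul_add_mod, Nat.mod_eq_of_lt i.isLt, Nat.mod_eq_of_lt j.isLt] at hmod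
  simp only [Nat.mul_add_div i.pos, Nat.div_eq_of_lt i.isLt, Nat.div_eq_of_lt j.isLt] at hdiv
  exact ⟨Fin.ext hmod, by simpa using hdiv⟩

lemma exists_height_sub_smul_lt {q v : Fin n → ℂ[X]} {k : ℕ} (hq : height q ≤ k)
    (hv : height v = k) : ∃ c : ℂ, height (q - c • v) < k := by
  obtain ⟨j, d, hvjd, hjd⟩ : ∃ j d, (v j).coeff d ≠ 0 ∧ n * d + j = k := by
    have := mt height_lt_iff.2 hv.not_lt
    push Not at this
    obtain ⟨j, d, hvjd, hk⟩ := this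
    exact ⟨j, d, hvjd, le_antisymm (height_le_iff.1 hv.le j d hvjd) hk⟩
  refine ⟨(q j).coeff d / (v j).coeff d, height_lt_iff.2 fun i e hqv => ?_⟩
  have hle : n * e + i ≤ k := by
    by_cases hqie : (q i).coeff e = 0
    · refine height_le_iff.1 hv.le i e fun hvie => hqv ?_
      simp [hqie, hvie]
    · exact height_le_iff.1 hq i e hqie
  refine hle.lt_of_ne fun heq => hqv ?_
  obtain ⟨rfl, rfl⟩ := Fin.eq_of_mul_add_eq (heq.trans hjd.symm)
  simp [div_mul_cancel₀ _ hvjd]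

lemma height_eVP_le (s : ℕ) : height (eVP n s) ≤ s := by
  refine height_le_iff.2 fun i d hcoeff => ?_
  by_cases hi : (i : ℕ) = s % n
  · simp only [eVP, hi, if_true, coeff_X_pow] at hcoeff
    have hd : d = s / n := by by_contra h; simp [h] at hcoeff
    rw [hd, hi, Nat.div_add_mod]
  · simp [eVP, hi] at hcoeff

lemma mem_span_of_height_lt {S : Set (Fin n → ℂ[X])} {m : ℕ}
    (hS : ∀ k < m, ∃ v ∈ S, height v = k) {q : Fin n → ℂ[X]} (hq : height q < m) :
    q ∈ Submodule.span ℂ S := by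
  induction m generalizing q with
  | zero =>
    have hq0 : q = 0 := funext fun i => Polynomial.ext fun d => by
      by_contra h
      exact absurd (height_lt_iff.1 hq i d h) (Nat.not_lt_zero _)
    exact hq0 ▸ Submodule.zero_mem _
  | succ m ih =>
    have ih' : ∀ {q'}, height q' < m → q' ∈ Submodule.span ℂ S := ih fun k hk => hS k (by omega)
    by_cases hqm : height q < m
    · exact ih' hqm
    have hqm' : height q = m := le_antisymm
      (height_le_iff.2 fun i d h => Nat.lt_succ_iff.1 (height_lt_iff.1 hq i d h)) (not_lt.1 hqm)
    obtain ⟨v, hvS, hv⟩ := hS m m.lt_succ_self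
    obtain ⟨c, hc⟩ := exists_height_sub_smul_lt hqm'.le hv
    rw [← sub_add_cancel q (c • v)]
    exact add_mem (ih' hc) (Submodule.smul_mem _ c (Submodule.subset_span hvS))

end height

namespace MatMeasureForm

variable {n : ℕ} (M : MatMeasureForm n)

lemma add_left (f g k : Fin n → ℂ[X]) : M.B (f + g) k = M.B f k + M.B g k := by
  rw [M.conj_symm, M.add_right, map_add, ← M.conj_symm, ← M.conj_symm]

lemma smul_left (c : ℂ) (f k : Fin n → ℂ[X]) :
    M.B (c • f) k = starRingEnd ℂ c * M.B f k := by
  rw [M.conj_symm, M.smul_right, map_mul, ← M.conj_symm]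

@[reducible]
def toCore : PreInnerProductSpace.Core ℂ (Fin n → ℂ[X]) where
  inner := M.B
  conj_inner_symm f g := (M.conj_symm g f).symm
  re_inner_nonneg := M.nonneg
  add_left := M.add_left
  smul_left f g c := M.smul_left c f g

def rightₗ (f : Fin n → ℂ[X]) : (Fin n → ℂ[X]) →ₗ[ℂ] ℂ where
  toFun := M.B f
  map_add' := M.add_right f
  map_smul' c := M.smul_right c f

lemma B_eq_zero_of_B_self_eq_zero {r : Fin n → ℂ[X]} (hr : M.B r r = 0)
    (f : Fin n → ℂ[X]) : M.B f r = 0 := by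
  have hcs := InnerProductSpace.Core.inner_mul_inner_self_le (c := M.toCore) f r
  change ‖M.B f r‖ * ‖M.B r f‖ ≤ (M.B f f).re * (M.B r r).re at hcs
  rw [hr, M.conj_symm f r, Complex.zero_re, mul_zero, RCLike.norm_conj] at hcs
  exact norm_eq_zero.1 (mul_self_eq_zero.1 (le_antisymm hcs (mul_self_nonneg _)))

lemma B_eq_zero_of_mem_span {S : Set (Fin n → ℂ[X])} {f : Fin n → ℂ[X]}
    (hf : ∀ v ∈ S, M.B f v = 0) {g : Fin n → ℂ[X]} (hg : g ∈ Submodule.span ℂ S) :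
    M.B f g = 0 :=
  (Submodule.span_le (p := LinearMap.ker (M.rightₗ f)) |>.2 hf) hg

lemma B_sub_sum_orthonormal_eq_zero {ι : Type*} [Fintype ι] [DecidableEq ι]
    {p : ι → Fin n → ℂ[X]} (horth : ∀ i j, M.B (p i) (p j) = if i = j then 1 else 0)
    (e : Fin n → ℂ[X]) (i : ι) : M.B (p i) (e - ∑ j, M.B (p j) e • p j) = 0 := by
  change M.rightₗ (p i) _ = 0
  simp only [map_sub, map_sum, map_smul]
  simp [rightₗ, horth]

end MatMeasureForm

theorem gram_schmidt_produces_null_general (n : ℕ) (M : MatMeasureForm n) (h₁ : ℕ)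
    (r : Fin n → Polynomial ℂ) (hrnull : M.B r r = 0)
    (hrh : height r = (h₁ : WithBot ℕ))
    (p : Fin h₁ → (Fin n → Polynomial ℂ))
    (horth : ∀ i j, M.B (p i) (p j) = if i = j then 1 else 0)
    (hph : ∀ k, height (p k) = ((k : ℕ) : WithBot ℕ)) :
    M.B (eVP n h₁ - ∑ i, M.B (p i) (eVP n h₁) • p i)
        (eVP n h₁ - ∑ i, M.B (p i) (eVP n h₁) • p i) = 0 := by
  set s := eVP n h₁ - ∑ i, M.B (p i) (eVP n h₁) • p i
  set S := insert r (Set.range p)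
  have hS : ∀ k < h₁ + 1, ∃ v ∈ S, height v = k := fun k hk =>
    (Nat.lt_succ_iff_lt_or_eq.1 hk).elim
      (fun hk => ⟨p ⟨k, hk⟩, Set.mem_insert_of_mem _ ⟨_, rfl⟩, hph ⟨k, hk⟩⟩)
      (fun hk => ⟨r, Set.mem_insert _ _, hk ▸ hrh⟩)
  have he : eVP n h₁ ∈ Submodule.span ℂ S :=
    mem_span_of_height_lt hS ((height_eVP_le h₁).trans_lt (by exact_mod_cast h₁.lt_succ_self))
  have hs : s ∈ Submodule.span ℂ S := Submodule.sub_mem _ he <| Submodule.sum_mem _ fun i _ =>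
    Submodule.smul_mem _ _ <| Submodule.subset_span <| Set.mem_insert_of_mem _ ⟨i, rfl⟩
  have hsS : ∀ v ∈ S, M.B s v = 0 := by
    rintro v (rfl | ⟨i, rfl⟩)
    · exact M.B_eq_zero_of_B_self_eq_zero hrnull s
    · rw [M.conj_symm, M.B_sub_sum_orthonormal_eq_zero horth, map_zero]
  exact M.B_eq_zero_of_mem_span hsS hs

/-- Let `r` be a nonzero null vector polynomial of minimal height `h₁` (every nonzero null
polynomial has height `≥ h₁`), and let `p_1,…,p_{h₁}` be the orthonormal vector polynomials
produced by the first `h₁` Gram–Schmidt iterations applied to `e_1, e_2, …` (so `h(p_k) = k-1`).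
Then the Gram–Schmidt vector `s = e_{h₁+1} − ∑_{i=1}^{h₁} ⟨p_i, e_{h₁+1}⟩ p_i` has zero norm.
(0-indexed: `e_{h₁+1} = eVP n h₁` and `p : Fin h₁` with `h(p k) = k`.) -/
theorem gram_schmidt_produces_null (n : ℕ) (M : MatMeasureForm n) (h₁ : ℕ)
    (r : Fin n → Polynomial ℂ) (hr0 : r ≠ 0) (hrnull : M.B r r = 0)
    (hrh : height r = (h₁ : WithBot ℕ))
    (hmin : ∀ t : Fin n → Polynomial ℂ, t ≠ 0 → M.B t t = 0 →
      (h₁ : WithBot ℕ) ≤ height t)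
    (p : Fin h₁ → (Fin n → Polynomial ℂ))
    (horth : ∀ i j, M.B (p i) (p j) = if i = j then 1 else 0)
    (hph : ∀ k, height (p k) = ((k : ℕ) : WithBot ℕ)) :
    M.B (eVP n h₁ - ∑ i, M.B (p i) (eVP n h₁) • p i)
        (eVP n h₁ - ∑ i, M.B (p i) (eVP n h₁) • p i) = 0 :=
  gram_schmidt_produces_null_general n M h₁ r hrnull hrh p horth hph
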